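/- arXiv:1304.7186 — 2 statements merged into one kernel-verified Lean document; each statement's English description precedes it below -/
import Mathlib

section
/- Let V be a vector configuration in a finite-dimensional real vector space E with dim E ≥ 1 and disc(V) = 0. Then codeg*(V) ≥ rank(V), and V admits a codegree* decomposition of length exactly codeg*(V) with S_0 = ∅ in which every part is either a singleton {i} with v_i = 0, or a pair {i, j} with v_j = −λ·v_i for some real λ > 0. -/
open scoped Classical

noncomputable section

variable {E : Type*} [AddCommGroup E] [Module ℝ E] {ι : Type*} [Fintype ι]

/-- Number of indices where the functional is positive. -/
def posCount (φ : E →ₗ[ℝ] ℝ) (V : ι → E) : ℕ :=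
  (Finset.univ.filter fun i => 0 < φ (V i)).card

/-- Number of indices where the functional is negative. -/
def negCount (φ : E →ₗ[ℝ] ℝ) (V : ι → E) : ℕ :=
  (Finset.univ.filter fun i => φ (V i) < 0).card

/-- Number of indices where the functional is nonpositive. -/
def nonposCount (φ : E →ₗ[ℝ] ℝ) (V : ι → E) : ℕ :=
  (Finset.univ.filter fun i => φ (V i) ≤ 0).card

/-- Dual codegree: minimum over nonzero functionals of `nonposCount`; by convention the
number of elements when the ambient space is zero-dimensional (trivial). -/
def codegStar (V : ι → E) : ℕ :=
  if Nontrivial E then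
    sInf {k | ∃ φ : E →ₗ[ℝ] ℝ, φ ≠ 0 ∧ nonposCount φ V = k}
  else Fintype.card ι

/-- Rank of a configuration: dimension of the linear span. -/
def confRank (V : ι → E) : ℕ :=
  Module.finrank ℝ (Submodule.span ℝ (Set.range V))

/-- Dual degree: maximum over nonzero functionals of `posCount`, minus the rank. -/
def degStar (V : ι → E) : ℤ :=
  (sSup {k | ∃ φ : E →ₗ[ℝ] ℝ, φ ≠ 0 ∧ posCount φ V = k} : ℕ) - (confRank V : ℤ)

/-- Covector discrepancy: maximum over all functionals of `|φ⁺(V) − φ⁻(V)|`. -/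
def disc (V : ι → E) : ℕ :=
  sSup {k | ∃ φ : E →ₗ[ℝ] ℝ, k = ((posCount φ V : ℤ) - (negCount φ V : ℤ)).natAbs}

/-- The subfamily of `V` indexed by `S`. -/
def subfam (V : ι → E) (S : Finset ι) : {i // i ∈ S} → E := fun i => V i.1

/-- The contraction `V/W`, where `W = V|S`: images of the remaining vectors in the
quotient by the span of `W`. -/
def contract (V : ι → E) (S : Finset ι) :
    {i // i ∉ S} → E ⧸ Submodule.span ℝ (V '' (S : Set ι)) :=
  fun i => Submodule.Quotient.mk (V i.1)

/-- `V|S` is linearly closed in `V`. -/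
def LinClosed (V : ι → E) (S : Finset ι) : Prop :=
  ∀ i, V i ∈ Submodule.span ℝ (V '' (S : Set ι)) → i ∈ S

/-- A codegree* decomposition of `V` of length `m`: a partition of the index set into
parts `S 0, S 1, …, S m` with `codegStar (V|S i) ≥ 1` for `i ≠ 0` and
`codegStar V = ∑_{i=1}^m codegStar (V|S i)`. -/
def IsCodegDecomp (V : ι → E) (m : ℕ) (S : Fin (m + 1) → Finset ι) : Prop :=
  (∀ i j, i ≠ j → Disjoint (S i) (S j)) ∧
  (∀ x, ∃ i, x ∈ S i) ∧
  (∀ i, i ≠ 0 → 1 ≤ codegStar (subfam V (S i))) ∧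
  codegStar V = ∑ i ∈ Finset.univ.erase (0 : Fin (m + 1)), codegStar (subfam V (S i))

/-!
Zero discrepancy says that for every functional the signs of its values on `V` sum to zero. This
balance passes to the vectors in the kernel of any functional `φ`: for large `t`, `t • φ + ψ` has
the sign of `φ` off that kernel and the sign of `ψ` on it. Applied to a `φ` whose kernel contains,
among the `V i`, exactly those on the line of a nonzero `V a`, balance on that line produces a
`V b` that is a negative multiple of `V a`. Removing such pairs, and zero vectors as singletons,
keeps the balance, so the index set splits into such parts. Every functional is `≤ 0` on some
member of each part, and one that vanishes on no nonzero `V i` on exactly one member; hence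
each part has `codeg* = 1` and `codeg* V` is the number of parts, which bounds the rank because
each part spans at most a line.
-/

open Finset

section

variable {ι : Type*}

theorem sum_sign_eq_card_pos_sub_card_neg {α : Type*} [Zero α] [LinearOrder α]
    (s : Finset ι) (f : ι → α) :
    ∑ i ∈ s, (SignType.sign (f i) : ℤ) = #{i ∈ s | 0 < f i} - #{i ∈ s | f i < 0} := by
  have hsign : ∀ x : α, (SignType.sign x : ℤ) =
      (if 0 < x then 1 else 0) - (if x < 0 then 1 else 0) := by
    intro x
    rcases lt_trichotomy x 0 with h | h | h
    · simp [sign_neg h, h, h.not_gt]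
    · simp [h]
    · simp [sign_pos h, h, h.not_gt]
  simp only [hsign, sum_sub_distrib, sum_boole]

theorem eventually_sign_mul_add {𝕜 : Type*} [Field 𝕜] [LinearOrder 𝕜] [IsStrictOrderedRing 𝕜]
    (a b : 𝕜) :
    ∀ᶠ t in Filter.atTop,
      SignType.sign (t * a + b) = if a = 0 then SignType.sign b else SignType.sign a := by
  rcases eq_or_ne a 0 with rfl | ha
  · simp
  filter_upwards [Filter.eventually_gt_atTop (|b| / |a|)] with t ht
  have hb : |b| < t * |a| := (div_lt_iff₀ (abs_pos.mpr ha)).mp ht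
  rw [if_neg ha]
  rcases ha.lt_or_gt with ha | ha
  · rw [abs_of_neg ha] at hb
    rw [sign_neg ha, sign_neg (by linarith [le_abs_self b])]
  · rw [abs_of_pos ha] at hb
    rw [sign_pos ha, sign_pos (by linarith [neg_abs_le b])]

theorem Submodule.exists_dual_forall_apply_eq_zero_iff {K M : Type*} [Field K] [Infinite K]
    [AddCommGroup M] [Module K M] (W : Submodule K M) (s : Finset ι) (v : ι → M) :
    ∃ φ : Module.Dual K M, ∀ i ∈ s, φ (v i) = 0 ↔ v i ∈ W := by
  obtain ⟨f, hf⟩ := Module.exists_dual_forall_apply_ne_zero (K := K)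
    (fun i : {i ∈ s | v i ∉ W} => W.mkQ (v i)) fun i => by
      simpa [Submodule.Quotient.mk_eq_zero] using (mem_filter.mp i.2).2
  refine ⟨f ∘ₗ W.mkQ, fun i hi => ⟨fun h => ?_, fun h => ?_⟩⟩
  · by_contra hW
    exact hf ⟨i, mem_filter.mpr ⟨hi, hW⟩⟩ h
  · simp [(Submodule.Quotient.mk_eq_zero W).mpr h]

theorem exists_dual_ne_zero_forall_apply_ne_zero {K M : Type*} [Field K] [Infinite K]
    [AddCommGroup M] [Module K M] [Nontrivial M] (s : Finset M) :
    ∃ φ : Module.Dual K M, φ ≠ 0 ∧ ∀ x ∈ s, x ≠ 0 → φ x ≠ 0 := by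
  obtain ⟨w, hw⟩ := exists_ne (0 : M)
  obtain ⟨φ, hφ⟩ := Module.exists_dual_forall_apply_ne_zero (K := K)
    (fun x : {x ∈ insert w s | x ≠ 0} => (x : M)) fun x => (mem_filter.mp x.2).2
  refine ⟨φ, fun h => hφ ⟨w, by simp [hw]⟩ (by simp [h]), fun x hx hx0 => ?_⟩
  exact hφ ⟨x, by simp [hx, hx0]⟩

theorem Finpartition.card_filter_eq_sum_parts {s : Finset ι} (P : Finpartition s)
    (q : ι → Prop) [DecidablePred q] : #{i ∈ s | q i} = ∑ p ∈ P.parts, #{i ∈ p | q i} := by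
  conv_lhs => rw [← P.biUnion_parts]
  rw [filter_biUnion, card_biUnion fun p hp p' hp' hpp' =>
    disjoint_filter_filter (P.disjoint hp hp' hpp')]
  rfl

end

theorem codegStar_eq_of_forall_le_nonposCount [Nontrivial E] {V : ι → E} {k : ℕ}
    (hle : ∀ φ : E →ₗ[ℝ] ℝ, φ ≠ 0 → k ≤ nonposCount φ V) {φ₀ : E →ₗ[ℝ] ℝ} (hφ₀ : φ₀ ≠ 0)
    (hk : nonposCount φ₀ V = k) : codegStar V = k := by
  rw [codegStar, if_pos ‹_›]
  exact le_antisymm (Nat.sInf_le ⟨φ₀, hφ₀, hk⟩)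
    (le_csInf ⟨k, φ₀, hφ₀, hk⟩ fun _ ⟨φ, hφ, h⟩ => h ▸ hle φ hφ)

section

variable {ι : Type*}

def IsBalancedOn (V : ι → E) (s : Finset ι) : Prop :=
  ∀ φ : E →ₗ[ℝ] ℝ, ∑ i ∈ s, (SignType.sign (φ (V i)) : ℤ) = 0

def IsElementaryPart (V : ι → E) (p : Finset ι) : Prop :=
  (∃ a, p = {a} ∧ V a = 0) ∨
    ∃ a b, ∃ lam : ℝ, 0 < lam ∧ a ≠ b ∧ p = {a, b} ∧ V b = -lam • V a ∧ V a ≠ 0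

variable {V : ι → E} {s p : Finset ι}

theorem IsBalancedOn.filter_apply_eq_zero (h : IsBalancedOn V s) (φ : E →ₗ[ℝ] ℝ) :
    IsBalancedOn V {i ∈ s | φ (V i) = 0} := by
  intro ψ
  obtain ⟨t, ht⟩ := ((Filter.eventually_all_finset s).mpr
    fun i _ => eventually_sign_mul_add (φ (V i)) (ψ (V i))).exists
  have hsum := h (t • φ + ψ)
  simp only [LinearMap.add_apply, LinearMap.smul_apply, smul_eq_mul] at hsum
  rw [sum_congr rfl fun i hi => congrArg ((↑) : SignType → ℤ) (ht i hi)] at hsum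
  have hsplit : ∀ x y : ℝ, ((if x = 0 then SignType.sign y else SignType.sign x : SignType) : ℤ) =
      SignType.sign x + if x = 0 then (SignType.sign y : ℤ) else 0 := by
    intro x y
    split_ifs with hx <;> simp [hx]
  rwa [sum_congr rfl fun i _ => hsplit _ _, sum_add_distrib, h φ, zero_add, ← sum_filter]
    at hsum

theorem IsBalancedOn.exists_neg_smul (h : IsBalancedOn V s) {a : ι} (ha : a ∈ s)
    (hVa : V a ≠ 0) : ∃ b ∈ s, ∃ lam : ℝ, 0 < lam ∧ V b = -lam • V a := by
  by_contra! hno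
  obtain ⟨φ, hφ⟩ := (ℝ ∙ V a).exists_dual_forall_apply_eq_zero_iff s V
  obtain ⟨ψ, hψ⟩ := Module.Projective.exists_dual_eq_one ℝ hVa
  refine (sum_pos' (fun i hi => ?_) ⟨a, ?_, ?_⟩).ne' (h.filter_apply_eq_zero φ ψ)
  · obtain ⟨hi, hφi⟩ := mem_filter.mp hi
    obtain ⟨c, hc⟩ := Submodule.mem_span_singleton.mp ((hφ i hi).mp hφi)
    have hc0 : 0 ≤ c := by
      by_contra! hc0
      exact hno i hi (-c) (by linarith) (by rw [neg_neg, hc])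
    rw [← hc, map_smul, hψ, smul_eq_mul, mul_one]
    rcases hc0.eq_or_lt with rfl | hc0
    · simp
    · simp [sign_pos hc0]
  · exact mem_filter.mpr ⟨ha, (hφ a ha).mpr (Submodule.mem_span_singleton_self _)⟩
  · simp [hψ]

theorem IsElementaryPart.isBalancedOn (hp : IsElementaryPart V p) : IsBalancedOn V p := by
  intro φ
  rcases hp with ⟨a, rfl, ha⟩ | ⟨a, b, lam, hlam, hab, rfl, hb, -⟩
  · simp [ha]
  · rw [sum_pair hab, hb, map_smul, smul_eq_mul, sign_mul, sign_neg (neg_lt_zero.mpr hlam)]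
    simp

theorem IsBalancedOn.sdiff (hs : IsBalancedOn V s) (hp : IsBalancedOn V p) (hps : p ⊆ s) :
    IsBalancedOn V (s \ p) := fun φ => by
  have h := sum_sdiff hps (f := fun i => (SignType.sign (φ (V i)) : ℤ))
  rwa [hs φ, hp φ, add_zero] at h

theorem IsBalancedOn.exists_elementaryPart (h : IsBalancedOn V s) {a : ι} (ha : a ∈ s) :
    ∃ p ⊆ s, a ∈ p ∧ IsElementaryPart V p := by
  by_cases hVa : V a = 0
  · exact ⟨{a}, singleton_subset_iff.mpr ha, mem_singleton_self a, .inl ⟨a, rfl, hVa⟩⟩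
  obtain ⟨b, hb, lam, hlam, hVb⟩ := h.exists_neg_smul ha hVa
  have hab : a ≠ b := by
    rintro rfl
    have : (1 + lam) • V a = 0 := by linear_combination (norm := module) hVb
    exact hVa ((smul_eq_zero.mp this).resolve_left (by linarith))
  exact ⟨{a, b}, insert_subset ha (singleton_subset_iff.mpr hb), mem_insert_self a _,
    .inr ⟨a, b, lam, hlam, hab, rfl, hVb, hVa⟩⟩

theorem IsBalancedOn.exists_finpartition (h : IsBalancedOn V s) :
    ∃ P : Finpartition s, ∀ p ∈ P.parts, IsElementaryPart V p := by
  induction s using Finset.strongInduction with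
  | H s ih =>
    rcases s.eq_empty_or_nonempty with rfl | ⟨a, ha⟩
    · exact ⟨Finpartition.empty _, by simp⟩
    obtain ⟨p, hps, hap, hp⟩ := h.exists_elementaryPart ha
    obtain ⟨P, hP⟩ := ih (s \ p) (sdiff_ssubset hps ⟨a, hap⟩) (h.sdiff hp.isBalancedOn hps)
    refine ⟨P.extend (b := p) (ne_empty_of_mem hap) sdiff_disjoint (sdiff_union_of_subset hps),
      ?_⟩
    simpa [Finpartition.extend_parts, hp] using hP

theorem IsElementaryPart.one_le_card_filter_nonpos (hp : IsElementaryPart V p)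
    (φ : E →ₗ[ℝ] ℝ) : 1 ≤ #{i ∈ p | φ (V i) ≤ 0} := by
  rcases hp with ⟨a, rfl, ha⟩ | ⟨a, b, lam, hlam, -, rfl, hb, -⟩
  · exact card_pos.mpr ⟨a, mem_filter.mpr ⟨mem_singleton_self a, by simp [ha]⟩⟩
  · by_cases hφa : φ (V a) ≤ 0
    · exact card_pos.mpr ⟨a, mem_filter.mpr ⟨mem_insert_self a _, hφa⟩⟩
    · refine card_pos.mpr ⟨b, mem_filter.mpr ⟨mem_insert_of_mem (mem_singleton_self b), ?_⟩⟩
      rw [hb, map_smul, smul_eq_mul]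
      nlinarith

theorem IsElementaryPart.card_filter_nonpos_eq_one (hp : IsElementaryPart V p)
    {φ : E →ₗ[ℝ] ℝ} (hφ : ∀ i ∈ p, V i ≠ 0 → φ (V i) ≠ 0) : #{i ∈ p | φ (V i) ≤ 0} = 1 := by
  rcases hp with ⟨a, rfl, ha⟩ | ⟨a, b, lam, hlam, hab, rfl, hb, hVa⟩
  · rw [filter_singleton, if_pos (by simp [ha]), card_singleton]
  · have hφa := hφ a (mem_insert_self a _) hVa
    have hφb : φ (V b) = -lam * φ (V a) := by rw [hb, map_smul, smul_eq_mul]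
    rw [filter_insert, filter_singleton]
    rcases hφa.lt_or_gt with hφa | hφa
    · rw [if_pos hφa.le, if_neg (by nlinarith), insert_empty, card_singleton]
    · rw [if_neg (by linarith), if_pos (by nlinarith), card_singleton]

theorem IsElementaryPart.exists_forall_mem_span_singleton (hp : IsElementaryPart V p) :
    ∃ a, ∀ i ∈ p, V i ∈ ℝ ∙ V a := by
  rcases hp with ⟨a, rfl, -⟩ | ⟨a, b, lam, -, -, rfl, hb, -⟩
  · exact ⟨a, by simp⟩
  · refine ⟨a, fun i hi => ?_⟩
    rcases mem_insert.mp hi with rfl | hi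
    · exact Submodule.mem_span_singleton_self _
    · rw [mem_singleton.mp hi, hb]
      exact Submodule.smul_mem _ _ (Submodule.mem_span_singleton_self _)

theorem nonposCount_subfam (φ : E →ₗ[ℝ] ℝ) (p : Finset ι) :
    nonposCount φ (subfam V p) = #{i ∈ p | φ (V i) ≤ 0} := by
  refine card_bij (fun i _ => i.1) (fun i hi => ?_) (fun _ _ _ _ => Subtype.ext) fun i hi => ?_
  · exact mem_filter.mpr ⟨i.2, (mem_filter.mp hi).2⟩
  · exact ⟨⟨i, (mem_filter.mp hi).1⟩, mem_filter.mpr ⟨mem_univ _, (mem_filter.mp hi).2⟩, rfl⟩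

theorem IsElementaryPart.codegStar_subfam [Nontrivial E] (hp : IsElementaryPart V p) :
    codegStar (subfam V p) = 1 := by
  obtain ⟨φ₀, hφ₀, hgen⟩ := exists_dual_ne_zero_forall_apply_ne_zero (K := ℝ) (p.image V)
  refine codegStar_eq_of_forall_le_nonposCount (fun φ _ => ?_) hφ₀ ?_ <;>
    rw [nonposCount_subfam]
  · exact hp.one_le_card_filter_nonpos φ
  · exact hp.card_filter_nonpos_eq_one fun i hi => hgen _ (mem_image_of_mem V hi)

end

variable {V : ι → E}

theorem isBalancedOn_univ_of_disc_eq_zero (h : disc V = 0) : IsBalancedOn V univ := by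
  intro φ
  have hbdd : BddAbove {k | ∃ φ : E →ₗ[ℝ] ℝ,
      k = ((posCount φ V : ℤ) - (negCount φ V : ℤ)).natAbs} := by
    refine ⟨Fintype.card ι, ?_⟩
    rintro k ⟨ψ, rfl⟩
    have h₁ : posCount ψ V ≤ Fintype.card ι := card_filter_le _ _
    have h₂ : negCount ψ V ≤ Fintype.card ι := card_filter_le _ _
    omega
  have hle := le_csSup hbdd ⟨φ, rfl⟩
  rw [← disc, h, Nat.le_zero, Int.natAbs_eq_zero, sub_eq_zero] at hle
  rw [sum_sign_eq_card_pos_sub_card_neg, sub_eq_zero]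
  exact hle

theorem codegStar_eq_card_parts [Nontrivial E] (P : Finpartition (univ : Finset ι))
    (hP : ∀ p ∈ P.parts, IsElementaryPart V p) : codegStar V = #P.parts := by
  obtain ⟨φ₀, hφ₀, hgen⟩ := exists_dual_ne_zero_forall_apply_ne_zero (K := ℝ) (univ.image V)
  refine codegStar_eq_of_forall_le_nonposCount (fun φ _ => ?_) hφ₀ ?_ <;>
    rw [nonposCount, P.card_filter_eq_sum_parts]
  · calc #P.parts = ∑ p ∈ P.parts, 1 := by rw [sum_const, smul_eq_mul, mul_one]
      _ ≤ _ := sum_le_sum fun p hp => (hP p hp).one_le_card_filter_nonpos φ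
  · rw [sum_congr rfl fun p hp => (hP p hp).card_filter_nonpos_eq_one fun i _ =>
      hgen _ (mem_image_of_mem V (mem_univ i)), sum_const, smul_eq_mul, mul_one]

theorem confRank_le_card_parts (P : Finpartition (univ : Finset ι))
    (hP : ∀ p ∈ P.parts, IsElementaryPart V p) : confRank V ≤ #P.parts := by
  choose r hr using fun p : P.parts => (hP p p.2).exists_forall_mem_span_singleton
  have := Module.Finite.span_of_finite ℝ (Set.finite_range (V ∘ r))
  calc confRank V ≤ Module.finrank ℝ (Submodule.span ℝ (Set.range (V ∘ r))) := by
        refine Submodule.finrank_mono (Submodule.span_le.mpr ?_)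
        rintro _ ⟨i, rfl⟩
        obtain ⟨p, hp, hip⟩ := P.exists_mem (mem_univ i)
        exact (Submodule.span_singleton_le_iff_mem _ _).mpr
          (Submodule.subset_span (Set.mem_range_self (f := V ∘ r) ⟨p, hp⟩)) (hr ⟨p, hp⟩ i hip)
    _ ≤ Fintype.card P.parts := finrank_range_le_card _
    _ = #P.parts := Fintype.card_coe _

theorem isCodegDecomp_cons {m : ℕ} (P : Finpartition (univ : Finset ι)) (e : Fin m ≃ P.parts)
    (hparts : ∀ p ∈ P.parts, codegStar (subfam V p) = 1) (hV : codegStar V = m) :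
    IsCodegDecomp V m (Fin.cons ∅ fun j => (e j : Finset ι) : Fin (m + 1) → Finset ι) := by
  set S : Fin (m + 1) → Finset ι := Fin.cons ∅ fun j => (e j : Finset ι) with hS
  have hone : ∀ i ≠ 0, codegStar (subfam V (S i)) = 1 := by
    intro i hi
    obtain ⟨j, rfl⟩ := Fin.exists_succ_eq.mpr hi
    exact hparts _ (e j).2
  refine ⟨fun i j hij => ?_, fun x => ?_, fun i hi => (hone i hi).ge, ?_⟩
  · cases i using Fin.cases with
    | zero => exact disjoint_empty_left _
    | succ i =>
      cases j using Fin.cases with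
      | zero => exact disjoint_empty_right _
      | succ j =>
        refine P.disjoint (e i).2 (e j).2 fun h => hij ?_
        rw [e.injective (Subtype.ext h)]
  · obtain ⟨p, hp, hxp⟩ := P.exists_mem (mem_univ x)
    exact ⟨(e.symm ⟨p, hp⟩).succ, by simpa [hS] using hxp⟩
  · rw [sum_congr rfl fun i hi => hone i (ne_of_mem_erase hi), sum_const, smul_eq_mul, mul_one,
      card_erase_of_mem (mem_univ _), card_univ, Fintype.card_fin, hV, Nat.add_sub_cancel]

theorem zero_disc_codegree_decomposition_general {E : Type*} [AddCommGroup E] [Module ℝ E]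
    (hE : 1 ≤ Module.finrank ℝ E)
    {ι : Type*} [Fintype ι] (V : ι → E) (hdisc : disc V = 0) :
    confRank V ≤ codegStar V ∧
    ∃ S : Fin (codegStar V + 1) → Finset ι,
      IsCodegDecomp V (codegStar V) S ∧ S 0 = ∅ ∧
      ∀ i : Fin (codegStar V + 1), i ≠ 0 →
        (∃ a, S i = {a} ∧ V a = 0) ∨
        (∃ a b, ∃ lam : ℝ, 0 < lam ∧ a ≠ b ∧ S i = {a, b} ∧ V b = -lam • V a) := by
  have : Nontrivial E := Module.nontrivial_of_finrank_pos hE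
  obtain ⟨P, hP⟩ := (isBalancedOn_univ_of_disc_eq_zero hdisc).exists_finpartition
  have hcodeg := codegStar_eq_card_parts P hP
  refine ⟨hcodeg ▸ confRank_le_card_parts P hP, ?_⟩
  rw [hcodeg]
  refine ⟨_, isCodegDecomp_cons P P.parts.equivFin.symm (fun p hp => (hP p hp).codegStar_subfam)
    hcodeg, rfl, fun i hi => ?_⟩
  obtain ⟨j, rfl⟩ := Fin.exists_succ_eq.mpr hi
  rcases hP _ (P.parts.equivFin.symm j).2 with h | ⟨a, b, lam, hlam, hab, hp, hb, -⟩
  · exact .inl (by simpa using h)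
  · exact .inr ⟨a, b, lam, hlam, hab, by simpa using hp, hb⟩

/-- a configuration with zero discrepancy has `codeg* ≥ rank` and admits a
codegree* decomposition of length exactly `codeg* V` with `S 0 = ∅` whose parts are
singletons carrying the zero vector or antipodal (up to positive rescaling) pairs. -/
theorem zero_disc_codegree_decomposition {E : Type*} [AddCommGroup E] [Module ℝ E]
    [FiniteDimensional ℝ E] (hE : 1 ≤ Module.finrank ℝ E)
    {ι : Type*} [Fintype ι] (V : ι → E) (hdisc : disc V = 0) :
    confRank V ≤ codegStar V ∧
    ∃ S : Fin (codegStar V + 1) → Finset ι,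
      IsCodegDecomp V (codegStar V) S ∧ S 0 = ∅ ∧
      ∀ i : Fin (codegStar V + 1), i ≠ 0 →
        (∃ a, S i = {a} ∧ V a = 0) ∨
        (∃ a b, ∃ lam : ℝ, 0 < lam ∧ a ≠ b ∧ S i = {a, b} ∧ V b = -lam • V a) :=
  zero_disc_codegree_decomposition_general hE V hdisc

end
end

section
/- Let V be a vector configuration in a finite-dimensional real vector space E with dim E ≥ 1, and let W = V|S be a subfamily that is linearly closed in V. Then the following three equalities are equivalent: (i) disc(V) = disc(W) + disc(V/W); (ii) deg*(V) = deg*(W) + deg*(V/W); (iii) codeg*(V) = codeg*(W) + codeg*(V/W). -/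
open scoped Classical

noncomputable section

variable {E : Type*} [AddCommGroup E] [Module ℝ E] {ι : Type*} [Fintype ι]

/-!
Write `n` for the number of vectors, `z` for the number of zero vectors and
`M` for the maximum of `φ⁺(V)` over nonzero functionals `φ`. Then `codeg* = n - M`,
`deg* = M - rank` and `disc = 2M + z - n`. For the last identity, perturb `φ` to
`φ ± εψ` with `ψ` nonzero on every nonzero `vᵢ`: this moves each nonzero vector of `ker φ`
to the positive side of exactly one of the two perturbations, and a perturbation of a
maximiser has zeros only at zero vectors.

The quantities `n`, `rank` and `z` are additive over `V ↦ (W, V/W)` when `W` is linearly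
closed (all zero vectors lie in `W`, none survive in `V/W`), so each of the three equalities is
equivalent to `M(V) = M(W) + M(V/W)`.
-/

open Finset Filter Topology

lemma eventually_pos_add_mul_iff (a b : ℝ) :
    ∀ᶠ ε in 𝓝[>] (0 : ℝ), 0 < a + ε * b ↔ 0 < a ∨ a = 0 ∧ 0 < b := by
  have hlim : Tendsto (fun ε : ℝ => a + ε * b) (𝓝[>] 0) (𝓝 a) :=
    ((continuous_const.add (continuous_id.mul continuous_const)).tendsto' 0 a
      (by simp)).mono_left nhdsWithin_le_nhds
  rcases lt_trichotomy a 0 with ha | rfl | ha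
  · filter_upwards [hlim.eventually (eventually_lt_nhds ha)] with ε hε
    constructor
    · intro h; linarith
    · rintro (h | ⟨h, -⟩) <;> linarith
  · filter_upwards [self_mem_nhdsWithin] with ε (hε : 0 < ε)
    simp [mul_pos_iff_of_pos_left hε]
  · filter_upwards [hlim.eventually (eventually_gt_nhds ha)] with ε hε
    simp [hε, ha]

lemma eventually_add_mul_neg_iff (a b : ℝ) :
    ∀ᶠ ε in 𝓝[>] (0 : ℝ), a + ε * b < 0 ↔ a < 0 ∨ a = 0 ∧ b < 0 := by
  filter_upwards [eventually_pos_add_mul_iff (-a) (-b)] with ε h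
  have e : -a + ε * -b = -(a + ε * b) := by ring
  simpa only [e, neg_pos, neg_eq_zero, neg_lt_zero] using h

/-- The sign of `(φ + ε • ψ) v` for small `ε > 0` is the lexicographic sign of `(φ v, ψ v)`. -/
lemma exists_lex_perturbation (V : ι → E) (φ ψ : E →ₗ[ℝ] ℝ) :
    ∃ χ : E →ₗ[ℝ] ℝ, ∀ i,
      (0 < χ (V i) ↔ 0 < φ (V i) ∨ φ (V i) = 0 ∧ 0 < ψ (V i)) ∧
      (χ (V i) < 0 ↔ φ (V i) < 0 ∨ φ (V i) = 0 ∧ ψ (V i) < 0) := by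
  have h : ∀ᶠ ε in 𝓝[>] (0 : ℝ), ∀ i,
      (0 < φ (V i) + ε * ψ (V i) ↔ 0 < φ (V i) ∨ φ (V i) = 0 ∧ 0 < ψ (V i)) ∧
      (φ (V i) + ε * ψ (V i) < 0 ↔ φ (V i) < 0 ∨ φ (V i) = 0 ∧ ψ (V i) < 0) :=
    eventually_all.2 fun i =>
      (eventually_pos_add_mul_iff _ _).and (eventually_add_mul_neg_iff _ _)
  obtain ⟨ε, hε⟩ := h.exists
  exact ⟨φ + ε • ψ, by simpa using hε⟩

def zeroCount (V : ι → E) : ℕ :=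
  #{i | V i = 0}

/-- `sSup ∅ = 0`, so this is `0` when `E` is trivial. -/
def maxPosCount (V : ι → E) : ℕ :=
  sSup {k | ∃ φ : E →ₗ[ℝ] ℝ, φ ≠ 0 ∧ posCount φ V = k}

lemma posCount_neg (φ : E →ₗ[ℝ] ℝ) (V : ι → E) : posCount (-φ) V = negCount φ V := by
  simp [posCount, negCount]

lemma negCount_neg (φ : E →ₗ[ℝ] ℝ) (V : ι → E) : negCount (-φ) V = posCount φ V := by
  simp [posCount, negCount]

lemma posCount_add_nonposCount (φ : E →ₗ[ℝ] ℝ) (V : ι → E) :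
    posCount φ V + nonposCount φ V = Fintype.card ι := by
  simpa [posCount, nonposCount] using card_filter_add_card_filter_not (s := univ)
    (fun i => 0 < φ (V i))

lemma bddAbove_posCount (V : ι → E) :
    BddAbove {k | ∃ φ : E →ₗ[ℝ] ℝ, φ ≠ 0 ∧ posCount φ V = k} :=
  ⟨Fintype.card ι, by rintro _ ⟨φ, -, rfl⟩; exact card_filter_le _ _⟩

lemma posCount_le_maxPosCount (φ : E →ₗ[ℝ] ℝ) (V : ι → E) :
    posCount φ V ≤ maxPosCount V := by
  rcases eq_or_ne φ 0 with rfl | hφ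
  · simp [posCount]
  · exact le_csSup (bddAbove_posCount V) ⟨φ, hφ, rfl⟩

lemma exists_posCount_eq_maxPosCount (V : ι → E) :
    ∃ φ : E →ₗ[ℝ] ℝ, posCount φ V = maxPosCount V := by
  rcases Set.eq_empty_or_nonempty {k | ∃ φ : E →ₗ[ℝ] ℝ, φ ≠ 0 ∧ posCount φ V = k} with h | h
  · exact ⟨0, by rw [maxPosCount, h, csSup_empty]; simp [posCount]⟩
  · obtain ⟨φ, -, hφ⟩ := Nat.sSup_mem h (bddAbove_posCount V)
    exact ⟨φ, hφ⟩

lemma codegStar_add_maxPosCount (V : ι → E) :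
    codegStar V + maxPosCount V = Fintype.card ι := by
  by_cases hE : Nontrivial E
  · obtain ⟨φ₀, hφ₀⟩ := exists_ne (0 : Module.Dual ℝ E)
    obtain ⟨φ, hφ, hmax⟩ := Nat.sSup_mem (by exact ⟨_, φ₀, hφ₀, rfl⟩) (bddAbove_posCount V)
    change posCount φ V = maxPosCount V at hmax
    have hleast : IsLeast {k | ∃ φ : E →ₗ[ℝ] ℝ, φ ≠ 0 ∧ nonposCount φ V = k}
        (Fintype.card ι - maxPosCount V) := by
      refine ⟨⟨φ, hφ, ?_⟩, ?_⟩
      · have := posCount_add_nonposCount φ V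
        omega
      · rintro _ ⟨ψ, -, rfl⟩
        have := posCount_add_nonposCount ψ V
        have := posCount_le_maxPosCount ψ V
        omega
    rw [codegStar, if_pos hE, hleast.csInf_eq]
    have := posCount_le_maxPosCount φ V
    have := posCount_add_nonposCount φ V
    omega
  · have : Subsingleton E := not_nontrivial_iff_subsingleton.1 hE
    have hset : {k | ∃ φ : E →ₗ[ℝ] ℝ, φ ≠ 0 ∧ posCount φ V = k} = ∅ := by
      ext k
      simp [Subsingleton.elim _ (0 : E →ₗ[ℝ] ℝ)]
    simp [codegStar, hE, maxPosCount, hset]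

lemma exists_dual_apply_ne_zero (V : ι → E) :
    ∃ ψ : E →ₗ[ℝ] ℝ, ∀ i, V i ≠ 0 → ψ (V i) ≠ 0 := by
  obtain ⟨ψ, hψ⟩ := Module.exists_dual_forall_apply_ne_zero (K := ℝ)
    (fun i : {i // V i ≠ 0} => V i) (fun i => i.2)
  exact ⟨ψ, fun i hi => hψ ⟨i, hi⟩⟩

lemma posCount_sub_negCount_le (φ : E →ₗ[ℝ] ℝ) (V : ι → E) :
    (posCount φ V : ℤ) - negCount φ V + Fintype.card ι ≤ 2 * maxPosCount V + zeroCount V := by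
  obtain ⟨ψ, hψ⟩ := exists_dual_apply_ne_zero V
  obtain ⟨χ₁, hχ₁⟩ := exists_lex_perturbation V φ ψ
  obtain ⟨χ₂, hχ₂⟩ := exists_lex_perturbation V φ (-ψ)
  have h₁ := posCount_le_maxPosCount χ₁ V
  have h₂ := posCount_le_maxPosCount χ₂ V
  suffices (posCount φ V : ℤ) - negCount φ V + Fintype.card ι ≤
      posCount χ₁ V + posCount χ₂ V + zeroCount V by omega
  rw [show (Fintype.card ι : ℤ) = ∑ _ : ι, 1 by simp]
  simp only [posCount, negCount, zeroCount, natCast_card_filter, ← sum_add_distrib,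
    ← sum_sub_distrib]
  refine sum_le_sum fun i _ => ?_
  simp only [(hχ₁ i).1, (hχ₂ i).1]
  by_cases hv : V i = 0
  · simp [hv]
  · rcases lt_trichotomy (φ (V i)) 0 with h | h | h
    · simp [h, h.ne, h.not_gt, hv]
    · rcases (hψ i hv).lt_or_gt with h' | h' <;> simp [h, h', h'.not_gt, hv]
    · simp [h, h.ne', h.not_gt, hv]

lemma exists_posCount_sub_negCount_eq (V : ι → E) :
    ∃ φ : E →ₗ[ℝ] ℝ,
      (posCount φ V : ℤ) - negCount φ V + Fintype.card ι = 2 * maxPosCount V + zeroCount V := by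
  obtain ⟨φ, hφ⟩ := exists_posCount_eq_maxPosCount V
  obtain ⟨ψ, hψ⟩ := exists_dual_apply_ne_zero V
  obtain ⟨χ, hχ⟩ := exists_lex_perturbation V φ ψ
  refine ⟨χ, le_antisymm (posCount_sub_negCount_le χ V) ?_⟩
  rw [← hφ, show (Fintype.card ι : ℤ) = ∑ _ : ι, 1 by simp]
  simp only [posCount, negCount, zeroCount, natCast_card_filter, mul_sum, ← sum_add_distrib,
    ← sum_sub_distrib]
  refine sum_le_sum fun i _ => ?_
  simp only [(hχ i).1, (hχ i).2]
  by_cases hv : V i = 0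
  · simp [hv]
  · rcases lt_trichotomy (φ (V i)) 0 with h | h | h
    · simp [h, h.ne, h.not_gt, hv]
    · rcases (hψ i hv).lt_or_gt with h' | h' <;> simp [h, h', h'.not_gt, hv]
    · simp [h, h.ne', h.not_gt, hv]

lemma natAbs_posCount_sub_negCount_le (φ : E →ₗ[ℝ] ℝ) (V : ι → E) :
    (((posCount φ V : ℤ) - negCount φ V).natAbs : ℤ) + Fintype.card ι ≤
      2 * maxPosCount V + zeroCount V := by
  have h₁ := posCount_sub_negCount_le φ V
  have h₂ := posCount_sub_negCount_le (-φ) V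
  rw [posCount_neg, negCount_neg] at h₂
  omega

lemma disc_add_card (V : ι → E) :
    (disc V : ℤ) + Fintype.card ι = 2 * maxPosCount V + zeroCount V := by
  obtain ⟨φ, hφ⟩ := exists_posCount_sub_negCount_eq V
  have hφ_le := natAbs_posCount_sub_negCount_le φ V
  have hgreatest : IsGreatest
      {k | ∃ φ : E →ₗ[ℝ] ℝ, k = ((posCount φ V : ℤ) - (negCount φ V : ℤ)).natAbs}
      ((posCount φ V : ℤ) - negCount φ V).natAbs := by
    refine ⟨⟨φ, rfl⟩, ?_⟩
    rintro _ ⟨ψ, rfl⟩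
    have := natAbs_posCount_sub_negCount_le ψ V
    omega
  rw [disc, hgreatest.csSup_eq]
  omega

lemma Submodule.finrank_map_mkQ_add_finrank {K M : Type*} [DivisionRing K] [AddCommGroup M]
    [Module K M] {W U : Submodule K M} (h : W ≤ U) [FiniteDimensional K U] :
    Module.finrank K (U.map W.mkQ) + Module.finrank K W = Module.finrank K U := by
  have := LinearMap.finrank_range_add_finrank_ker (W.mkQ.domRestrict U)
  rwa [LinearMap.range_domRestrict, LinearMap.ker_domRestrict, Submodule.ker_mkQ,
    (Submodule.comapSubtypeEquivOfLe h).finrank_eq] at this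

lemma degStar_eq (V : ι → E) : degStar V = maxPosCount V - confRank V := rfl

lemma range_subfam {α β : Type*} (V : α → β) (S : Finset α) :
    Set.range (subfam V S) = V '' S := by
  ext; simp [subfam]

lemma span_range_contract {ι : Type*} (V : ι → E) (S : Finset ι) :
    Submodule.span ℝ (Set.range (contract V S)) =
      (Submodule.span ℝ (Set.range V)).map (Submodule.span ℝ (V '' S)).mkQ := by
  rw [Submodule.map_span, ← Set.range_comp]
  refine le_antisymm (Submodule.span_mono ?_) (Submodule.span_le.2 ?_)
  · rintro _ ⟨i, rfl⟩
    exact ⟨i, rfl⟩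
  · rintro _ ⟨i, rfl⟩
    by_cases hi : i ∈ S
    · simp [(Submodule.Quotient.mk_eq_zero _).2
        (Submodule.subset_span (Set.mem_image_of_mem V (mem_coe.2 hi)))]
    · exact Submodule.subset_span ⟨⟨i, hi⟩, rfl⟩

lemma confRank_subfam_add_confRank_contract (V : ι → E) (S : Finset ι) :
    confRank (subfam V S) + confRank (contract V S) = confRank V := by
  have := FiniteDimensional.span_of_finite ℝ (Set.finite_range V)
  rw [confRank, confRank, confRank, range_subfam, span_range_contract, add_comm]
  exact Submodule.finrank_map_mkQ_add_finrank
    (Submodule.span_mono (Set.image_subset_range V _))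

lemma contract_ne_zero {ι : Type*} {V : ι → E} {S : Finset ι} (hS : LinClosed V S)
    (i : {i // i ∉ S}) :
    contract V S i ≠ 0 := fun h =>
  i.2 (hS i ((Submodule.Quotient.mk_eq_zero _).1 h))

lemma zeroCount_subfam_add_zeroCount_contract {V : ι → E} {S : Finset ι} (hS : LinClosed V S) :
    zeroCount (subfam V S) + zeroCount (contract V S) = zeroCount V := by
  have hV : ∀ i : {i // i ∉ S}, V i ≠ 0 := fun i h =>
    contract_ne_zero hS i (by simp [contract, h])
  simp only [zeroCount, card_filter,
    ← Fintype.sum_subtype_add_sum_subtype (· ∈ S) (fun i => if V i = 0 then 1 else 0)]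
  congr 1
  · convert rfl using 3
    exact Iff.rfl
  · simp [contract_ne_zero hS, hV]

theorem disc_degStar_codegStar_additivity_equiv_general {E : Type*} [AddCommGroup E] [Module ℝ E]
    {ι : Type*} [Fintype ι] (V : ι → E) (S : Finset ι) (hS : LinClosed V S) :
    ((disc V = disc (subfam V S) + disc (contract V S)) ↔
      (degStar V = degStar (subfam V S) + degStar (contract V S))) ∧
    ((degStar V = degStar (subfam V S) + degStar (contract V S)) ↔
      (codegStar V = codegStar (subfam V S) + codegStar (contract V S))) := by
  have hcard := Fintype.card_subtype_compl (· ∈ S)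
  have hcard' := Fintype.card_subtype_le (· ∈ S)
  have hrank := confRank_subfam_add_confRank_contract V S
  have hzero := zeroCount_subfam_add_zeroCount_contract hS
  have hcodegV := codegStar_add_maxPosCount V
  have hcodegW := codegStar_add_maxPosCount (subfam V S)
  have hcodegQ := codegStar_add_maxPosCount (contract V S)
  have hdiscV := disc_add_card V
  have hdiscW := disc_add_card (subfam V S)
  have hdiscQ := disc_add_card (contract V S)
  rw [degStar_eq, degStar_eq, degStar_eq]
  constructor <;> constructor <;> intro h <;> omega

/-- for a linearly closed subfamily `W = V|S`, the equalities
`disc V = disc W + disc (V/W)`, `deg* V = deg* W + deg* (V/W)` and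
`codeg* V = codeg* W + codeg* (V/W)` are equivalent. -/
theorem disc_degStar_codegStar_additivity_equiv {E : Type*} [AddCommGroup E] [Module ℝ E]
    [FiniteDimensional ℝ E] (hE : 1 ≤ Module.finrank ℝ E)
    {ι : Type*} [Fintype ι] (V : ι → E) (S : Finset ι) (hS : LinClosed V S) :
    ((disc V = disc (subfam V S) + disc (contract V S)) ↔
      (degStar V = degStar (subfam V S) + degStar (contract V S))) ∧
    ((degStar V = degStar (subfam V S) + degStar (contract V S)) ↔
      (codegStar V = codegStar (subfam V S) + codegStar (contract V S))) :=
  disc_degStar_codegStar_additivity_equiv_general V S hS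
end
end
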